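/- arXiv:2507.02717 — 2 statements merged into one kernel-verified Lean document; each statement's English description precedes it below -/
import Mathlib

section
/- Let G be a finite directed graph whose adjacency matrix is primitive (so its edge shift C_G is topologically mixing), let a be a finite directed path in G, and let X be a subshift with topological entropy h(X) < h(C_G). For m ∈ ℕ let N_m denote the number of directed paths of length m in G that traverse the path a at least once (i.e. all paths of length m minus those avoiding a). Then for any fixed constant R ∈ ℕ, the ratio N_{l−R} / card(L_l(X)) tends to infinity as l → ∞. In particular, there exists ℓ such that for all l ≥ ℓ, card(L_l(X)) ≤ N_{l−R}, so there exist injections from L_l(X) into the set of paths of length l−R in G that traverse a. -/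
open Filter Function Set

/-- The left shift on bi-infinite sequences. -/
def shiftMap (A : Type*) : (ℤ → A) → (ℤ → A) := fun x n => x (n + 1)

/-- The shift by an integer amount `l` (so `zShift A l = (shiftMap A)^l`). -/
def zShift (A : Type*) (l : ℤ) (x : ℤ → A) : ℤ → A := fun n => x (n + l)

/-- A subshift: a closed, shift-invariant subset of the full shift. -/
def IsSubshift (A : Type*) [TopologicalSpace A] (X : Set (ℤ → A)) : Prop :=
  IsClosed X ∧ shiftMap A '' X = X

/-- The set of points of `X` of period `n`. -/
def perPts (A : Type*) (n : ℕ) (X : Set (ℤ → A)) : Set (ℤ → A) :=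
  {x ∈ X | (shiftMap A)^[n] x = x}

/-- `x` has least period `n`. -/
def HasLeastPeriod (A : Type*) (x : ℤ → A) (n : ℕ) : Prop :=
  (shiftMap A)^[n] x = x ∧ ∀ m : ℕ, 1 ≤ m → m < n → (shiftMap A)^[m] x ≠ x

/-- The words of length `n` occurring in points of `X`. -/
def wordsOf (A : Type*) (X : Set (ℤ → A)) (n : ℕ) : Set (Fin n → A) :=
  {w | ∃ x ∈ X, ∀ i : Fin n, w i = x (i : ℤ)}

/-- `h` is the topological entropy of `X`, as the limit of `(1/n) log card(L_n(X))`. -/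
def HasEntropy (A : Type*) (X : Set (ℤ → A)) (h : ℝ) : Prop :=
  Filter.Tendsto (fun n : ℕ => Real.log (Nat.card (wordsOf A X n)) / n)
    Filter.atTop (nhds h)

/-- Topological mixing of a subshift. -/
def IsMixing (A : Type*) [TopologicalSpace A] (X : Set (ℤ → A)) : Prop :=
  ∀ U V : Set (ℤ → A), IsOpen U → IsOpen V → (U ∩ X).Nonempty → (V ∩ X).Nonempty →
    ∃ N : ℕ, ∀ n : ℕ, N ≤ n → ((shiftMap A)^[n] '' (U ∩ X) ∩ (V ∩ X)).Nonempty

/-- The word `w` occurs in `x` at position `i`. -/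
def occursAt (A : Type*) (w : List A) (x : ℤ → A) (i : ℤ) : Prop :=
  ∀ j : ℕ, (hj : j < w.length) → x (i + j) = w.get ⟨j, hj⟩

/-- A subshift of finite type: the points avoiding a finite set of forbidden words. -/
def IsSFT (A : Type*) (Y : Set (ℤ → A)) : Prop :=
  ∃ F : Finset (List A), Y = {x | ∀ w ∈ F, ∀ i : ℤ, ¬ occursAt A w x i}

/-- An embedding of the subshift `X` into the subshift `Y`: an injective continuous
map intertwining the shifts. -/
def IsSubshiftEmbedding {A B : Type*} [TopologicalSpace A] [TopologicalSpace B]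
    (X : Set (ℤ → A)) (Y : Set (ℤ → B)) (f : (ℤ → A) → (ℤ → B)) : Prop :=
  Set.MapsTo f X Y ∧ Set.InjOn f X ∧ ContinuousOn f X ∧
    ∀ x ∈ X, f (shiftMap A x) = shiftMap B (f x)

/-- Finite directed paths in a graph with source and target maps `src`, `trg`. -/
def IsGPath {V E : Type*} (src trg : E → V) (p : List E) : Prop :=
  p.Chain' fun e f => trg e = src f

/-- The adjacency matrix of the graph. -/
noncomputable def adjMatrix (V E : Type*) [Fintype V] [Fintype E] (src trg : E → V) :
    Matrix V V ℕ := fun u v => Nat.card {e : E // src e = u ∧ trg e = v}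

/-- A nonnegative integer matrix is primitive if some power is entrywise positive. -/
def IsPrimitive {V : Type*} [Fintype V] [DecidableEq V] (M : Matrix V V ℕ) : Prop :=
  ∃ k : ℕ, 0 < k ∧ ∀ u v : V, 0 < (M ^ k) u v

/-- The edge shift of the graph: all bi-infinite directed edge paths. -/
def edgeShift (V E : Type*) (src trg : E → V) : Set (ℤ → E) :=
  {c | ∀ k : ℤ, trg (c k) = src (c (k + 1))}

/-- The label map sending a bi-infinite path to its label sequence. -/
def labelMap {E Θ : Type*} (lab : E → Θ) (c : ℤ → E) : ℤ → Θ := fun k => lab (c k)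

/-- The graph is strongly connected. -/
def StronglyConnected {V E : Type*} (src trg : E → V) : Prop :=
  ∀ u v : V, ∃ (p : List E) (hp : p ≠ []), IsGPath src trg p ∧
    src (p.head hp) = u ∧ trg (p.getLast hp) = v

/-!
Since some power `M ^ k` of the adjacency matrix is positive, any two edges can be joined by a
path with `k` intermediate edges. Following a path of length `n + 1` by such a connector and
then by a fixed path `f :: b` containing `a` injects the paths of length `n + 1` into the paths
of length `n + 1 + k + |f :: b|` traversing `a`. Thus `N (l - R) ≥ card L_{l - c}(C_G)` for a
constant `c`, which eventually exceeds `exp (t (l - c))` for any `t < h(C_G)`, whereas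
`card L_l(X) ≤ exp (s l)` eventually for any `s > h(X)`; choosing `h(X) < s < t < h(C_G)`, the
ratio tends to infinity.
-/

section Entropy

variable {A : Type*} {X : Set (ℤ → A)} {h : ℝ}

theorem HasEntropy.nonneg (hX : HasEntropy A X h) : 0 ≤ h :=
  ge_of_tendsto' hX fun _ => div_nonneg (Real.log_natCast_nonneg _) (Nat.cast_nonneg _)

theorem HasEntropy.nonempty_of_pos (hX : HasEntropy A X h) (hpos : 0 < h) : X.Nonempty := by
  by_contra hempty
  obtain rfl := Set.not_nonempty_iff_eq_empty.mp hempty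
  have hzero : HasEntropy A ∅ 0 := by simp [HasEntropy, wordsOf]
  exact hpos.ne' (tendsto_nhds_unique hX hzero)

theorem HasEntropy.eventually_card_le_exp {s : ℝ} (hX : HasEntropy A X h) (hs : h < s) :
    ∀ᶠ n : ℕ in atTop, (Nat.card (wordsOf A X n) : ℝ) ≤ Real.exp (s * n) := by
  filter_upwards [hX.eventually_lt_const hs, eventually_gt_atTop 0] with n hlt hn
  have hlog : Real.log (Nat.card (wordsOf A X n)) ≤ s * n :=
    ((div_lt_iff₀ (Nat.cast_pos.mpr hn)).mp hlt).le
  calc (Nat.card (wordsOf A X n) : ℝ) ≤ Real.exp (Real.log (Nat.card (wordsOf A X n))) :=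
        Real.le_exp_log _
    _ ≤ Real.exp (s * n) := Real.exp_le_exp.mpr hlog

theorem HasEntropy.eventually_exp_le_card {s : ℝ} (hX : HasEntropy A X h) (hs0 : 0 ≤ s)
    (hs : s < h) : ∀ᶠ n : ℕ in atTop, Real.exp (s * n) ≤ Nat.card (wordsOf A X n) := by
  filter_upwards [hX.eventually_const_lt hs, eventually_gt_atTop 0] with n hlt hn
  have hlog : s * n < Real.log (Nat.card (wordsOf A X n)) :=
    (lt_div_iff₀ (Nat.cast_pos.mpr hn)).mp hlt
  have hcard : 0 < Nat.card (wordsOf A X n) := Nat.pos_of_ne_zero fun hzero => by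
    rw [hzero, Nat.cast_zero, Real.log_zero] at hlog
    exact hlog.not_ge (by positivity)
  exact ((Real.lt_log_iff_exp_lt (Nat.cast_pos.mpr hcard)).mp hlog).le

end Entropy

theorem eventually_mul_exp_le_exp {s t : ℝ} (hst : s < t) (c : ℕ) (C : ℝ) :
    ∀ᶠ n : ℕ in atTop, C * Real.exp (s * n) ≤ Real.exp (t * (n - c : ℕ)) := by
  have hgap : Tendsto (fun n : ℕ => Real.exp ((t - s) * n - t * c)) atTop atTop :=
    Real.tendsto_exp_atTop.comp <| tendsto_atTop_add_const_right _ _ <|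
      tendsto_natCast_atTop_atTop.const_mul_atTop (sub_pos.mpr hst)
  filter_upwards [hgap.eventually_ge_atTop C, eventually_ge_atTop c] with n hC hn
  calc C * Real.exp (s * n) ≤ Real.exp ((t - s) * n - t * c) * Real.exp (s * n) :=
        mul_le_mul_of_nonneg_right hC (Real.exp_pos _).le
    _ = Real.exp (t * (n - c : ℕ)) := by
        rw [← Real.exp_add, Nat.cast_sub hn]
        ring_nf

theorem eventually_mul_card_wordsOf_le_of_entropy_lt {A B : Type*} {X : Set (ℤ → A)}
    {Y : Set (ℤ → B)} {hX hY : ℝ} (hXent : HasEntropy A X hX) (hYent : HasEntropy B Y hY)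
    (hlt : hX < hY) (c : ℕ) (C : ℝ) :
    ∀ᶠ n : ℕ in atTop, C * Nat.card (wordsOf A X n) ≤ Nat.card (wordsOf B Y (n - c)) := by
  obtain ⟨s, hXs, hsY⟩ := exists_between hlt
  obtain ⟨t, hst, htY⟩ := exists_between hsY
  have ht0 : 0 ≤ t := hXent.nonneg.trans (hXs.trans hst).le
  filter_upwards [hXent.eventually_card_le_exp hXs,
    (tendsto_sub_atTop_nat c).eventually (hYent.eventually_exp_le_card ht0 htY),
    eventually_mul_exp_le_exp hst c (max C 0)] with n hXn hYn hgap
  calc C * (Nat.card (wordsOf A X n) : ℝ) ≤ max C 0 * Nat.card (wordsOf A X n) :=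
        mul_le_mul_of_nonneg_right (le_max_left _ _) (Nat.cast_nonneg _)
    _ ≤ max C 0 * Real.exp (s * n) := mul_le_mul_of_nonneg_left hXn (le_max_right _ _)
    _ ≤ Real.exp (t * (n - c : ℕ)) := hgap
    _ ≤ Nat.card (wordsOf B Y (n - c)) := hYn

section Paths

variable {V E : Type*} {src trg : E → V}

instance {n : ℕ} {P : List E → Prop} [Finite E] : Finite {p : List E // p.length = n ∧ P p} :=
  ((List.finite_length_eq E n).subset fun _ hp => hp.1).to_subtype

theorem IsGPath.append_connect {p r q : List E} {e f : E} (hp : IsGPath src trg (p ++ [e]))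
    (hr : IsGPath src trg (e :: r ++ [f])) (hq : IsGPath src trg (f :: q)) :
    IsGPath src trg (p ++ e :: r ++ f :: q) := by
  have hpr : IsGPath src trg (p ++ e :: r ++ [f]) := by
    rw [show p ++ e :: r ++ [f] = p ++ [e] ++ (r ++ [f]) by simp]
    exact hp.append_overlap hr (List.cons_ne_nil _ _)
  rw [show p ++ e :: r ++ f :: q = p ++ e :: r ++ [f] ++ q by simp]
  exact hpr.append_overlap hq (List.cons_ne_nil _ _)

theorem exists_isGPath_of_adjMatrix_pow_pos [Fintype V] [Fintype E] [DecidableEq V] {k : ℕ}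
    {e f : E} (h : 0 < (adjMatrix V E src trg ^ k) (trg e) (src f)) :
    ∃ r : List E, r.length = k ∧ IsGPath src trg (e :: r ++ [f]) := by
  induction k generalizing e with
  | zero =>
    rw [pow_zero, Matrix.one_apply] at h
    split_ifs at h with hef
    · exact ⟨[], rfl, List.isChain_pair.mpr hef⟩
    · exact (lt_irrefl 0 h).elim
  | succ k ih =>
    rw [pow_succ', Matrix.mul_apply] at h
    obtain ⟨w, -, hw⟩ := Finset.sum_pos_iff.mp h
    obtain ⟨hedge, hpow⟩ := CanonicallyOrderedAdd.mul_pos.mp hw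
    obtain ⟨⟨g, hsrc, htrg⟩⟩ := (Nat.card_pos_iff.mp hedge).1
    obtain ⟨r, hlen, hr⟩ := ih (e := g) (htrg ▸ hpow)
    exact ⟨g :: r, by simp [hlen], List.isChain_cons_cons.mpr ⟨hsrc.symm, hr⟩⟩

theorem isGPath_ofFn_of_mem_wordsOf_edgeShift {n : ℕ} {w : Fin n → E}
    (hw : w ∈ wordsOf E (edgeShift V E src trg) n) : IsGPath src trg (List.ofFn w) := by
  obtain ⟨x, hx, hwx⟩ := hw
  refine List.isChain_ofFn.mpr fun i hi => ?_
  rw [hwx, hwx]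
  simpa using hx i

theorem card_wordsOf_edgeShift_le_card_traversing [Finite E] {k : ℕ}
    (hconn : ∀ e f : E, ∃ r : List E, r.length = k ∧ IsGPath src trg (e :: r ++ [f]))
    {a b : List E} {f : E} (hb : IsGPath src trg (f :: b)) (hab : a <:+: f :: b) (n : ℕ) :
    Nat.card (wordsOf E (edgeShift V E src trg) (n + 1)) ≤
      Nat.card {p : List E //
        p.length = n + 1 + k + (f :: b).length ∧ IsGPath src trg p ∧ a <:+: p} := by
  choose r hrlen hr using hconn
  refine Nat.card_le_card_of_injective
    (fun w => ⟨List.ofFn w.1 ++ r (w.1 (Fin.last n)) f ++ f :: b, ?_, ?_, ?_⟩) ?_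
  · simp only [List.length_append, List.length_ofFn, hrlen]
  · have hw := isGPath_ofFn_of_mem_wordsOf_edgeShift w.2
    rw [List.ofFn_succ', List.concat_eq_append] at hw ⊢
    simpa using hw.append_connect (hr _ f) hb
  · exact hab.trans (List.suffix_append _ _).isInfix
  · intro w₁ w₂ hw
    have hprefix := List.append_inj_left (congrArg Subtype.val hw) (by simp [hrlen])
    exact Subtype.ext (List.ofFn_injective (List.append_inj_left hprefix (by simp)))

end Paths

theorem Finite.exists_injective_of_card_le {α β : Type*} [Finite α] [Finite β]
    (h : Nat.card α ≤ Nat.card β) : ∃ g : α → β, Injective g := by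
  have := Fintype.ofFinite α
  have := Fintype.ofFinite β
  rw [Nat.card_eq_fintype_card, Nat.card_eq_fintype_card] at h
  obtain ⟨g⟩ := Function.Embedding.nonempty_of_card_le h
  exact ⟨g, g.injective⟩

theorem paths_traversing_outgrow_words_general {A : Type*} [Fintype A]
    {V E : Type*} [Fintype V] [Fintype E] [DecidableEq V]
    (src trg : E → V)
    (hprim : IsPrimitive (adjMatrix V E src trg))
    (a : List E) (ha : IsGPath src trg a)
    (X : Set (ℤ → A))
    (hent : ∃ hx hc : ℝ, HasEntropy A X hx ∧
      HasEntropy E (edgeShift V E src trg) hc ∧ hx < hc)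
    (R : ℕ)
    (N : ℕ → ℕ)
    (hN : ∀ m : ℕ, N m = Nat.card {p : List E // p.length = m ∧ IsGPath src trg p ∧ a <:+: p}) :
    (∀ C : ℝ, ∀ᶠ l : ℕ in Filter.atTop,
        C * (Nat.card (wordsOf A X l) : ℝ) ≤ (N (l - R) : ℝ)) ∧
      ∃ ℓ : ℕ, ∀ l : ℕ, ℓ ≤ l →
        Nat.card (wordsOf A X l) ≤ N (l - R) ∧
        ∃ f : wordsOf A X l → {p : List E // p.length = l - R ∧ IsGPath src trg p ∧ a <:+: p},
          Function.Injective f := by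
  obtain ⟨hX, hC, hXent, hCent, hlt⟩ := hent
  obtain ⟨x, -⟩ := hCent.nonempty_of_pos (hXent.nonneg.trans_lt hlt)
  obtain ⟨f, b, hb, hab⟩ : ∃ f b, IsGPath src trg (f :: b) ∧ a <:+: f :: b := by
    rcases a with _ | ⟨f, b⟩
    · exact ⟨x 0, [], List.isChain_singleton _, List.nil_infix⟩
    · exact ⟨f, b, ha, List.infix_rfl⟩
  obtain ⟨k, -, hk⟩ := hprim
  have hconn e f := exists_isGPath_of_adjMatrix_pow_pos (hk (trg e) (src f))
  set c := R + k + (f :: b).length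
  have hgrowth (C : ℝ) :
      ∀ᶠ l : ℕ in atTop, C * (Nat.card (wordsOf A X l) : ℝ) ≤ N (l - R) := by
    filter_upwards [eventually_mul_card_wordsOf_le_of_entropy_lt hXent hCent hlt c C,
      eventually_gt_atTop c] with l hl hcl
    obtain ⟨n, hn⟩ : ∃ n, l - c = n + 1 := ⟨l - c - 1, by omega⟩
    have hlen : l - R = n + 1 + k + (f :: b).length := by omega
    rw [hn] at hl
    rw [hN, hlen]
    exact hl.trans (by exact_mod_cast card_wordsOf_edgeShift_le_card_traversing hconn hb hab n)
  refine ⟨hgrowth, ?_⟩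
  obtain ⟨ℓ, hℓ⟩ := eventually_atTop.mp (hgrowth 1)
  refine ⟨ℓ, fun l hl => ?_⟩
  have hcard : Nat.card (wordsOf A X l) ≤ N (l - R) := by simpa using hℓ l hl
  exact ⟨hcard, Finite.exists_injective_of_card_le (hN _ ▸ hcard)⟩

/-- if `G` is a finite directed graph with primitive adjacency matrix, `a`
is a path in `G`, and `X` is a subshift with `h(X) < h(C_G)`, then for fixed `R` the
number `N (l - R)` of paths of length `l - R` traversing `a` outgrows `card (L_l X)` (the
ratio tends to infinity); in particular for all large `l` there is an injection of
`L_l X` into the paths of length `l - R` traversing `a`. -/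
theorem paths_traversing_outgrow_words {A : Type*} [Fintype A]
    [TopologicalSpace A] [DiscreteTopology A]
    {V E : Type*} [Fintype V] [Fintype E] [DecidableEq V]
    (src trg : E → V)
    (hprim : IsPrimitive (adjMatrix V E src trg))
    (a : List E) (ha : IsGPath src trg a)
    (X : Set (ℤ → A)) (hX : IsSubshift A X)
    (hent : ∃ hx hc : ℝ, HasEntropy A X hx ∧
      HasEntropy E (edgeShift V E src trg) hc ∧ hx < hc)
    (R : ℕ)
    (N : ℕ → ℕ)
    (hN : ∀ m : ℕ, N m = Nat.card {p : List E // p.length = m ∧ IsGPath src trg p ∧ a <:+: p}) :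
    (∀ C : ℝ, ∀ᶠ l : ℕ in Filter.atTop,
        C * (Nat.card (wordsOf A X l) : ℝ) ≤ (N (l - R) : ℝ)) ∧
      ∃ ℓ : ℕ, ∀ l : ℕ, ℓ ≤ l →
        Nat.card (wordsOf A X l) ≤ N (l - R) ∧
        ∃ f : wordsOf A X l → {p : List E // p.length = l - R ∧ IsGPath src trg p ∧ a <:+: p},
          Function.Injective f :=
  paths_traversing_outgrow_words_general src trg hprim a ha X hent R N hN
end

section
/- Let Σ be a finite alphabet, X ⊆ Σ^ℤ a subshift, and ℓ ∈ ℕ. Call a word c ∈ L_{2ℓ}(X) periodic if there exists Q with 1 ≤ Q ≤ ℓ such that c_{[0, 2ℓ−Q)} = c_{[Q, 2ℓ)}. Then there exists a subset F ⊆ X such that: (i) for all x ∈ X and all integers k < m with S^k x ∈ F and S^m x ∈ F, one has m − k > ℓ; and (ii) every x ∈ X whose word x_{[1,2ℓ]} is not periodic satisfies S^l x ∈ F for some integer l with −ℓ ≤ l ≤ ℓ. -/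
open Filter Function Set

/-- The word `x_{[1, 2ℓ]}` of `x` is periodic: it has a period `Q` with `1 ≤ Q ≤ ℓ`. -/
def CentralWordPeriodic {A : Type*} (ℓ : ℕ) (x : ℤ → A) : Prop :=
  ∃ Q : ℕ, 1 ≤ Q ∧ Q ≤ ℓ ∧ ∀ m : ℕ, m + Q < 2 * ℓ →
    x (1 + (m : ℤ)) = x (1 + (m : ℤ) + (Q : ℤ))

/-- marker lemma: for any subshift `X` and any `ℓ` there is a set `F ⊆ X`
such that (i) any two visits of an orbit to `F` are more than `ℓ` apart, and (ii) every
point whose word `x_{[1,2ℓ]}` is not periodic has a shift by some `l ∈ [-ℓ, ℓ]` in `F`. -/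
theorem marker_set_exists {A : Type*} [Fintype A]
    [TopologicalSpace A] [DiscreteTopology A]
    (X : Set (ℤ → A)) (hX : IsSubshift A X) (ℓ : ℕ) :
    ∃ F : Set (ℤ → A), F ⊆ X ∧
      (∀ x ∈ X, ∀ k m : ℤ, k < m → zShift A k x ∈ F → zShift A m x ∈ F →
        (ℓ : ℤ) < m - k) ∧
      (∀ x ∈ X, ¬ CentralWordPeriodic ℓ x →
        ∃ l : ℤ, -(ℓ : ℤ) ≤ l ∧ l ≤ (ℓ : ℤ) ∧ zShift A l x ∈ F) := by
  classical
  have hzz : ∀ (l k : ℤ) (y : ℤ → A), zShift A l (zShift A k y) = zShift A (l + k) y := by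
    intro l k y; funext n; simp only [zShift]; ring_nf
  have hz0 : ∀ y : ℤ → A, zShift A 0 y = y := by
    intro y; funext n; simp [zShift]
  set Sep : Set (Set (ℤ → A)) :=
    {F | F ⊆ X ∧ ∀ y ∈ X, ∀ k m : ℤ, k < m → zShift A k y ∈ F → zShift A m y ∈ F →
      (ℓ : ℤ) < m - k} with hSepDef
  have hchain : ∀ c ⊆ Sep, IsChain (· ⊆ ·) c → ∃ ub ∈ Sep, ∀ s ∈ c, s ⊆ ub := by
    intro c hc hch
    refine ⟨⋃₀ c, ⟨?_, ?_⟩, fun s hs => subset_sUnion_of_mem hs⟩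
    · intro z hz
      obtain ⟨F, hFc, hzF⟩ := hz
      exact (hc hFc).1 hzF
    · intro y hy k m hkm h1 h2
      obtain ⟨F1, hF1c, h1⟩ := h1
      obtain ⟨F2, hF2c, h2⟩ := h2
      rcases eq_or_ne F1 F2 with rfl | hne
      · exact (hc hF1c).2 y hy k m hkm h1 h2
      · rcases hch hF1c hF2c hne with hsub | hsub
        · exact (hc hF2c).2 y hy k m hkm (hsub h1) h2
        · exact (hc hF1c).2 y hy k m hkm h1 (hsub h2)
  obtain ⟨M, hM⟩ := zorn_subset Sep hchain
  refine ⟨M, hM.1.1, hM.1.2, ?_⟩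
  intro x hx hnp
  by_contra hno
  push_neg at hno
  have hxM : x ∉ M := by
    intro h
    exact hno 0 (by simp) (by simp) (by rw [hz0]; exact h)
  have hins : insert x M ∈ Sep := by
    constructor
    · exact Set.insert_subset hx hM.1.1
    · intro y hy k m hkm h1 h2
      by_contra hle
      push_neg at hle
      have hm0 : (0 : ℤ) < m - k := by omega
      rcases h1 with h1 | h1
      · rcases h2 with h2 | h2
        · -- both equal x : x is periodic with period m - k ≤ ℓ
          have hperiod : zShift A k y = zShift A m y := h1.trans h2.symm
          refine hnp ⟨(m - k).toNat, ?_, ?_, ?_⟩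
          · omega
          · omega
          · intro m' _
            have hx1 : x (1 + (m' : ℤ)) = y (1 + (m' : ℤ) + k) := by
              rw [← h1]; rfl
            have hx2 : x (1 + (m' : ℤ) + ((m - k).toNat : ℤ)) =
                y (1 + (m' : ℤ) + ((m - k).toNat : ℤ) + k) := by
              rw [← h1]; rfl
            have hyeq : y (1 + (m' : ℤ) + k) = y (1 + (m' : ℤ) + m) := by
              have := congrFun hperiod (1 + (m' : ℤ))
              simpa [zShift] using this
            rw [hx1, hx2, hyeq]
            congr 1
            omega
        · -- zShift k y = x, zShift m y ∈ M
          have : zShift A (m - k) x ∈ M := by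
            rw [← h1, hzz]
            have : m - k + k = m := by ring
            rw [this]; exact h2
          exact hno (m - k) (by omega) (by omega) this
      · rcases h2 with h2 | h2
        · -- zShift m y = x, zShift k y ∈ M
          have : zShift A (k - m) x ∈ M := by
            rw [← h2, hzz]
            have : k - m + m = k := by ring
            rw [this]; exact h1
          exact hno (k - m) (by omega) (by omega) this
        · exact absurd (hM.1.2 y hy k m hkm h1 h2) (by omega)
  have := hM.2 hins (Set.subset_insert x M)
  exact hxM (this (Set.mem_insert x M))
end
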